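/- Let (Ω, 𝓕) be a measurable space and let ρ and ρ′ be two distinct probability measures on (Ω, 𝓕). Then for every m ≥ 1 there exist 2m pairwise distinct numbers ε₁, …, ε_{2m} ∈ [0,1], a partition of the index set {1,…,2m} into two sets S and T each of size m, and positive weights (β_i)_{i=1}^{2m} with ∑_{i∈S} β_i = 1 and ∑_{j∈T} β_j = 1, such that, writing μ_i = ε_i ρ + (1 − ε_i) ρ′, one has ∑_{i∈S} β_i · μ_i^{×(2m−2)} = ∑_{j∈T} β_j · μ_j^{×(2m−2)} as measures on Ω^{2m−2}. In particular, the two mixtures of measures ∑_{i∈S} β_i δ_{μ_i} and ∑_{j∈T} β_j δ_{μ_j} are distinct mixtures of m components with identical (2m−2)-fold product laws. -/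

import Mathlib

/-!
Take the `2m` nodes `εᵢ = i / (2m)` and their Lagrange nodal weights
`wᵢ = ∏_{j ≠ i} (εᵢ - εⱼ)⁻¹`. The sum `∑ wᵢ p(εᵢ)` is the coefficient of `X ^ (2m - 1)` in the
interpolant of `p`, so it vanishes for every polynomial `p` of degree at most `2m - 2`. The mass
of a box `∏ Aₖ` under `μᵢ^{×(2m-2)}` is `∏ₖ (εᵢ ρ(Aₖ) + (1 - εᵢ) ρ'(Aₖ))`, a polynomial of degree
`2m - 2` in `εᵢ`; hence `∑ wᵢ μᵢ^{×(2m-2)}` vanishes on boxes. Since the nodes are increasing, the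
sign of `wᵢ` is `(-1)^(2m-1-i)`: positive exactly at the `m` odd indices. Moving the negative
terms to the other side and normalising gives two mixtures that agree on boxes, hence everywhere.
-/

open MeasureTheory Polynomial Finset

namespace Lagrange

section Field

variable {F : Type*} [Field F] {ι : Type*} [DecidableEq ι] {s : Finset ι} {v : ι → F}

theorem sum_nodalWeight_mul_eval_eq_zero (hvs : Set.InjOn v s) {P : F[X]}
    (hP : P.degree < ↑(#s - 1)) : ∑ i ∈ s, nodalWeight s v i * P.eval (v i) = 0 := by
  have h := coeff_eq_sum hvs (hP.trans_le (by exact_mod_cast Nat.sub_le _ _))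
  rw [coeff_eq_zero_of_degree_lt hP] at h
  rw [h]
  refine Finset.sum_congr rfl fun i _ => ?_
  rw [nodalWeight, prod_inv_distrib, div_eq_mul_inv, mul_comm]

theorem sum_nodalWeight_mul_prod_eq_zero {κ : Type*} [Fintype κ] (hvs : Set.InjOn v s)
    (hκ : Fintype.card κ + 1 < #s) (a b : κ → F) :
    ∑ i ∈ s, nodalWeight s v i * ∏ k, (v i * a k + (1 - v i) * b k) = 0 := by
  have hdeg : (∏ k, (C (a k - b k) * X + C (b k))).natDegree ≤ Fintype.card κ :=
    (natDegree_prod_le _ _).trans <| (sum_le_card_nsmul _ _ 1 fun k _ =>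
      natDegree_linear_le).trans (by simp)
  have hlt : (∏ k, (C (a k - b k) * X + C (b k))).degree < ↑(#s - 1) :=
    (degree_le_natDegree.trans (WithBot.coe_le_coe.2 hdeg)).trans_lt
      (WithBot.coe_lt_coe.2 (show Fintype.card κ < #s - 1 by omega))
  convert sum_nodalWeight_mul_eval_eq_zero hvs hlt using 3 with i
  simp only [eval_prod, eval_add, eval_mul, eval_C, eval_X]
  exact prod_congr rfl fun k _ => by ring

end Field

section OrderedField

variable {F : Type*} [Field F] [LinearOrder F] [IsStrictOrderedRing F]

theorem neg_one_pow_mul_nodalWeight_pos {n : ℕ} {v : Fin n → F} (hv : StrictMono v)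
    (i : Fin n) : 0 < (-1) ^ (n - 1 - i) * nodalWeight univ v i := by
  have hsign : ((-1) ^ (n - 1 - i) : F) = ∏ j ∈ univ.erase i, if i < j then -1 else 1 := by
    rw [prod_ite, prod_const_one, mul_one, prod_const, ← Fin.card_Ioi]
    congr 2
    ext j
    simp only [mem_Ioi, mem_filter, mem_erase, mem_univ, and_true]
    exact ⟨fun h => ⟨h.ne', h⟩, And.right⟩
  rw [hsign, nodalWeight, ← prod_mul_distrib]
  refine prod_pos fun j hj => ?_
  rcases lt_or_gt_of_ne (ne_of_mem_erase hj) with hji | hij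
  · rw [if_neg hji.not_gt, one_mul]
    exact inv_pos.2 (sub_pos.2 (hv hji))
  · rw [if_pos hij, neg_one_mul, ← inv_neg, neg_sub]
    exact inv_pos.2 (sub_pos.2 (hv hij))

theorem nodalWeight_pos_iff_odd {m : ℕ} {v : Fin (2 * m) → F} (hv : StrictMono v)
    (i : Fin (2 * m)) : 0 < nodalWeight univ v i ↔ Odd (i : ℕ) := by
  have h := neg_one_pow_mul_nodalWeight_pos hv i
  have hi := i.isLt
  rcases Nat.even_or_odd (2 * m - 1 - i) with he | ho
  · rw [he.neg_one_pow, one_mul] at h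
    rw [Nat.even_iff] at he
    exact iff_of_true h (Nat.odd_iff.2 (by omega))
  · rw [ho.neg_one_pow, neg_one_mul, neg_pos] at h
    rw [Nat.odd_iff] at ho
    exact iff_of_false h.not_gt (by rw [Nat.not_odd_iff_even, Nat.even_iff]; omega)

end OrderedField

end Lagrange

theorem Fin.card_filter_odd_two_mul (m : ℕ) : #{i : Fin (2 * m) | Odd (i : ℕ)} = m := by
  have : ({i : Fin (2 * m) | Odd (i : ℕ)} : Finset _) =
      univ.image fun k : Fin m => (⟨2 * k + 1, by omega⟩ : Fin (2 * m)) := by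
    ext i
    simp only [mem_filter, mem_univ, true_and, mem_image, Fin.ext_iff]
    constructor
    · rintro ⟨k, hk⟩
      exact ⟨⟨k, by omega⟩, hk.symm⟩
    · rintro ⟨k, hk⟩
      exact ⟨k, hk.symm⟩
  rw [this, card_image_of_injective _ fun a b h => Fin.ext (by simpa using congrArg Fin.val h),
    card_univ, Fintype.card_fin]

theorem exists_alternating_weights_sum_mul_prod_eq_zero {m : ℕ} (hm : 1 ≤ m)
    {v : Fin (2 * m) → ℝ} (hv : StrictMono v) :
    ∃ c : Fin (2 * m) → ℝ, (∀ i, c i ≠ 0) ∧ (∀ i, 0 < c i ↔ Odd (i : ℕ)) ∧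
      ∑ i ∈ {i : Fin (2 * m) | Odd (i : ℕ)}, |c i| = 1 ∧
      ∀ (κ : Type) [Fintype κ], Fintype.card κ ≤ 2 * m - 2 → ∀ a b : κ → ℝ,
        ∑ i, c i * ∏ k, (v i * a k + (1 - v i) * b k) = 0 := by
  set w := Lagrange.nodalWeight univ v
  have hw : ∀ i, w i ≠ 0 := fun i => Lagrange.nodalWeight_ne_zero hv.injective.injOn (mem_univ i)
  set r := (∑ i ∈ {i : Fin (2 * m) | Odd (i : ℕ)}, |w i|)⁻¹
  have hr : 0 < r := inv_pos.2 <| sum_pos (fun i _ => abs_pos.2 (hw i))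
    (card_pos.1 (by rw [Fin.card_filter_odd_two_mul]; omega))
  refine ⟨fun i => r * w i, fun i => mul_ne_zero hr.ne' (hw i),
    fun i => (mul_pos_iff_of_pos_left hr).trans (Lagrange.nodalWeight_pos_iff_odd hv i), ?_,
    fun κ _ hκ a b => ?_⟩
  · simp only [abs_mul, abs_of_pos hr, ← mul_sum]
    exact inv_mul_cancel₀ (inv_pos.1 hr).ne'
  · simp only [mul_assoc, ← mul_sum]
    rw [Lagrange.sum_nodalWeight_mul_prod_eq_zero hv.injective.injOn
      (by rw [card_univ, Fintype.card_fin]; omega), mul_zero]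

theorem Finset.sum_abs_mul_eq_sum_compl_abs_mul {ι : Type*} [Fintype ι] [DecidableEq ι]
    {S : Finset ι} {c P : ι → ℝ} (hS : ∀ i ∈ S, 0 ≤ c i) (hSc : ∀ i ∉ S, c i ≤ 0)
    (h : ∑ i, c i * P i = 0) : ∑ i ∈ S, |c i| * P i = ∑ i ∈ Sᶜ, |c i| * P i := by
  have hpos : ∑ i ∈ S, |c i| * P i = ∑ i ∈ S, c i * P i :=
    Finset.sum_congr rfl fun i hi => by rw [abs_of_nonneg (hS i hi)]
  have hneg : ∑ i ∈ Sᶜ, |c i| * P i = -∑ i ∈ Sᶜ, c i * P i := by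
    rw [← sum_neg_distrib]
    exact Finset.sum_congr rfl fun i hi => by rw [abs_of_nonpos (hSc i (mem_compl.1 hi)), neg_mul]
  rw [← sum_add_sum_compl S] at h
  linarith

namespace MeasureTheory.Measure

variable {Ω : Type*} [MeasurableSpace Ω]

theorem ext_of_pi_univ_pi {κ : Type*} [Fintype κ] {α : κ → Type*}
    [∀ k, MeasurableSpace (α k)] {μ ν : Measure (∀ k, α k)} [IsFiniteMeasure μ]
    (h : ∀ t : ∀ k, Set (α k), (∀ k, MeasurableSet (t k)) →
      μ (Set.univ.pi t) = ν (Set.univ.pi t)) : μ = ν := by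
  refine ext_of_generate_finite _ generateFrom_pi.symm isPiSystem_pi ?_ ?_
  · rintro _ ⟨t, ht, rfl⟩
    exact h t fun k => ht k (Set.mem_univ k)
  · simpa using h (fun _ => Set.univ) fun _ => MeasurableSet.univ

theorem finsetSum_smul_pi_apply_univ_pi {ι κ : Type*} [Fintype κ] (μ : ι → Measure Ω)
    [∀ i, IsFiniteMeasure (μ i)] (W : Finset ι) {w : ι → ℝ} (hw : ∀ i ∈ W, 0 ≤ w i)
    (t : κ → Set Ω) :
    (∑ i ∈ W, ENNReal.ofReal (w i) • Measure.pi fun _ : κ => μ i) (Set.univ.pi t) =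
      ENNReal.ofReal (∑ i ∈ W, w i * ∏ k, (μ i).real (t k)) := by
  rw [finsetSum_apply, ENNReal.ofReal_sum_of_nonneg fun i hi =>
    mul_nonneg (hw i hi) (prod_nonneg fun k _ => measureReal_nonneg)]
  refine Finset.sum_congr rfl fun i hi => ?_
  rw [smul_apply, pi_pi, smul_eq_mul, ENNReal.ofReal_mul (hw i hi),
    ENNReal.ofReal_prod_of_nonneg fun k _ => measureReal_nonneg]
  simp only [measureReal_def, ENNReal.ofReal_toReal (measure_ne_top _ _)]

theorem sum_abs_smul_pi_eq_sum_compl {ι κ : Type*} [Fintype ι] [DecidableEq ι] [Fintype κ]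
    (μ : ι → Measure Ω) [∀ i, IsFiniteMeasure (μ i)] {S : Finset ι} {c : ι → ℝ}
    (hS : ∀ i ∈ S, 0 ≤ c i) (hSc : ∀ i ∉ S, c i ≤ 0)
    (hc : ∀ t : κ → Set Ω, ∑ i, c i * ∏ k, (μ i).real (t k) = 0) :
    ∑ i ∈ S, ENNReal.ofReal |c i| • Measure.pi (fun _ : κ => μ i) =
      ∑ i ∈ Sᶜ, ENNReal.ofReal |c i| • Measure.pi (fun _ : κ => μ i) := by
  have : ∀ i, IsFiniteMeasure (ENNReal.ofReal |c i| • Measure.pi fun _ : κ => μ i) :=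
    fun _ => isFiniteMeasureSMulNNReal
  refine ext_of_pi_univ_pi fun t _ => ?_
  rw [finsetSum_smul_pi_apply_univ_pi _ _ (fun i _ => abs_nonneg _),
    finsetSum_smul_pi_apply_univ_pi _ _ (fun i _ => abs_nonneg _),
    sum_abs_mul_eq_sum_compl_abs_mul hS hSc (hc t)]

noncomputable def convexComb (ρ ρ' : Measure Ω) (ε : ℝ) : Measure Ω :=
  ENNReal.ofReal ε • ρ + ENNReal.ofReal (1 - ε) • ρ'

variable {ρ ρ' : Measure Ω} {ε : ℝ}

theorem measureReal_convexComb [IsFiniteMeasure ρ] [IsFiniteMeasure ρ'] (hε : ε ∈ Set.Icc 0 1)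
    (A : Set Ω) : (convexComb ρ ρ' ε).real A = ε * ρ.real A + (1 - ε) * ρ'.real A := by
  rw [convexComb, measureReal_add_apply (by simp [ENNReal.mul_eq_top])
      (by simp [ENNReal.mul_eq_top]), measureReal_ennreal_smul_apply,
    measureReal_ennreal_smul_apply, ENNReal.toReal_ofReal hε.1,
    ENNReal.toReal_ofReal (sub_nonneg.2 hε.2)]

theorem isProbabilityMeasure_convexComb [IsProbabilityMeasure ρ] [IsProbabilityMeasure ρ']
    (hε : ε ∈ Set.Icc 0 1) : IsProbabilityMeasure (convexComb ρ ρ' ε) :=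
  ⟨by simp [convexComb, ← ENNReal.ofReal_add hε.1 (sub_nonneg.2 hε.2)]⟩

theorem injOn_convexComb [IsFiniteMeasure ρ] [IsFiniteMeasure ρ'] (h : ρ ≠ ρ') :
    Set.InjOn (convexComb ρ ρ') (Set.Icc 0 1) := by
  intro ε hε ε' hε' heq
  by_contra hne
  refine h (ext fun A _ => ?_)
  have hA := congrArg (·.real A) heq
  simp only [measureReal_convexComb hε, measureReal_convexComb hε'] at hA
  have hreal : ρ.real A = ρ'.real A := by
    have : (ε - ε') * (ρ.real A - ρ'.real A) = 0 := by linear_combination hA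
    exact sub_eq_zero.1 ((mul_eq_zero.1 this).resolve_left (sub_ne_zero.2 hne))
  exact (ENNReal.toReal_eq_toReal_iff' (measure_ne_top _ _) (measure_ne_top _ _)).1 hreal

end MeasureTheory.Measure

/-- **Construction of the non-identifiable pair.** For any two distinct probability
measures `ρ ≠ ρ'` and any `m ≥ 1`, there are `2m` pairwise distinct mixing parameters
`εᵢ ∈ [0,1]`, a partition of `{1,…,2m}` into sets `S, T` of size `m`, and positive
weights `βᵢ` summing to `1` over `S` and over `T`, such that, with
`μᵢ = εᵢ ρ + (1 - εᵢ) ρ'` (all pairwise distinct), the two mixtures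
`∑_{i∈S} βᵢ δ_{μᵢ}` and `∑_{j∈T} βⱼ δ_{μⱼ}` have identical `(2m-2)`-fold product laws. -/
theorem exists_distinct_mixtures_eq_prod_law
    {Ω : Type*} [MeasurableSpace Ω] (ρ ρ' : Measure Ω)
    [IsProbabilityMeasure ρ] [IsProbabilityMeasure ρ'] (hρ : ρ ≠ ρ')
    (m : ℕ) (hm : 1 ≤ m) :
    ∃ (ε : Fin (2 * m) → ℝ) (S T : Finset (Fin (2 * m))) (β : Fin (2 * m) → ℝ),
      (∀ i, ε i ∈ Set.Icc (0 : ℝ) 1) ∧ Function.Injective ε ∧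
      Function.Injective
        (fun i => ENNReal.ofReal (ε i) • ρ + ENNReal.ofReal (1 - ε i) • ρ') ∧
      Disjoint S T ∧ S ∪ T = Finset.univ ∧ S.card = m ∧ T.card = m ∧
      (∀ i, 0 < β i) ∧ (∑ i ∈ S, β i = 1) ∧ (∑ j ∈ T, β j = 1) ∧
      ∑ i ∈ S, ENNReal.ofReal (β i) • Measure.pi (fun _ : Fin (2 * m - 2) =>
          ENNReal.ofReal (ε i) • ρ + ENNReal.ofReal (1 - ε i) • ρ')
        = ∑ j ∈ T, ENNReal.ofReal (β j) • Measure.pi (fun _ : Fin (2 * m - 2) =>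
          ENNReal.ofReal (ε j) • ρ + ENNReal.ofReal (1 - ε j) • ρ') := by
  set ε : Fin (2 * m) → ℝ := fun i => i / (2 * m)
  have hε : StrictMono ε := fun i j hij =>
    div_lt_div_of_pos_right (by exact_mod_cast hij) (by positivity)
  have hεI : ∀ i, ε i ∈ Set.Icc (0 : ℝ) 1 := fun i =>
    ⟨by positivity, div_le_one_of_le₀ (by exact_mod_cast i.isLt.le) (by positivity)⟩
  have := fun i => Measure.isProbabilityMeasure_convexComb (ρ := ρ) (ρ' := ρ') (hεI i)
  obtain ⟨c, hc0, hc_pos, hc_sum, hc⟩ := exists_alternating_weights_sum_mul_prod_eq_zero hm hε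
  set S : Finset (Fin (2 * m)) := {i | Odd (i : ℕ)}
  have hS : ∀ i ∈ S, 0 ≤ c i := fun i hi => ((hc_pos i).2 (mem_filter.1 hi).2).le
  have hSc : ∀ i ∉ S, c i ≤ 0 := fun i hi =>
    not_lt.1 fun h => hi (mem_filter.2 ⟨mem_univ i, (hc_pos i).1 h⟩)
  have hSm : #S = m := Fin.card_filter_odd_two_mul m
  refine ⟨ε, S, Sᶜ, fun i => |c i|, hεI, hε.injective,
    fun i j h => hε.injective (Measure.injOn_convexComb hρ (hεI i) (hεI j) h),
    disjoint_compl_right, union_compl S, hSm, by rw [card_compl, hSm, Fintype.card_fin]; omega,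
    fun i => abs_pos.2 (hc0 i), hc_sum, ?_, ?_⟩
  · have hc_total : ∑ i, c i * 1 = 0 := by simpa using hc Empty (by simp) Empty.elim Empty.elim
    simpa [hc_sum] using (sum_abs_mul_eq_sum_compl_abs_mul hS hSc hc_total).symm
  · exact Measure.sum_abs_smul_pi_eq_sum_compl (fun i => ρ.convexComb ρ' (ε i)) hS hSc fun t => by
      simpa only [Measure.measureReal_convexComb (hεI _)] using hc _ (by simp) _ _
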